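/- Let W be a stochastic matrix from a finite set X to pmfs on a finite set Y, and for α ∈ (0,1] let q_{α,W} be the order-α Rényi center of W. Then for all 0 < α ≤ η ≤ 1, C_η(W) − C_α(W) ≥ D_α(q_{α,W} ‖ q_{η,W}). -/

import Mathlib

open Real MeasureTheory Filter

def IsPMF {Y : Type*} [Fintype Y] (W : Y → ℝ) : Prop :=
  (∀ y, 0 ≤ W y) ∧ ∑ y, W y = 1

noncomputable def renyiDiv {Y : Type*} [Fintype Y] (α : ℝ) (W Q : Y → ℝ) : ℝ :=
  if α = 1 then ∑ y, W y * Real.log (W y / Q y)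
  else (α - 1)⁻¹ * Real.log (∑ y, W y ^ α * Q y ^ (1 - α))

open Classical in
/-- Extended-real-valued order-`α` Rényi divergence, taking the value `⊤` when the
divergence is infinite. -/
noncomputable def renyiDivE {Y : Type*} [Fintype Y] (α : ℝ) (W Q : Y → ℝ) : ENNReal :=
  if α = 1 then
    (if ∀ y, Q y = 0 → W y = 0 then ENNReal.ofReal (renyiDiv 1 W Q) else ⊤)
  else
    (if 0 < ∑ y, W y ^ α * Q y ^ (1 - α) then ENNReal.ofReal (renyiDiv α W Q) else ⊤)

/-- The order-`α` tilted pmf `W^α_Q`. -/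
noncomputable def tilt {Y : Type*} [Fintype Y] (α : ℝ) (W Q : Y → ℝ) : Y → ℝ :=
  fun y => Real.exp ((1 - α) * renyiDiv α W Q) * W y ^ α * Q y ^ (1 - α)

/-- The order-`α` Rényi information `I_α(P;W)` (mutual information for `α = 1`). -/
noncomputable def renyiInfo {X Y : Type*} [Fintype X] [Fintype Y] (α : ℝ) (P : X → ℝ)
    (W : X → Y → ℝ) : ℝ :=
  if α = 1 then ∑ x, P x * ∑ y, W x y * Real.log (W x y / (∑ x', P x' * W x' y))
  else (α / (α - 1)) * Real.log (∑ y, (∑ x, P x * W x y ^ α) ^ α⁻¹)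

/-- The order-`α` Rényi capacity `C_α(W) = sup_P I_α(P;W)`. -/
noncomputable def renyiCap {X Y : Type*} [Fintype X] [Fintype Y] (α : ℝ) (W : X → Y → ℝ) : ℝ :=
  sSup {c | ∃ P : X → ℝ, IsPMF P ∧ c = renyiInfo α P W}

/-- The sphere packing exponent `E_sp(R,W)`. -/
noncomputable def spe {X Y : Type*} [Fintype X] [Fintype Y] (R : ℝ) (W : X → Y → ℝ) : ℝ :=
  sSup {e | ∃ α ∈ Set.Ioo (0:ℝ) 1, e = ((1 - α) / α) * (renyiCap α W - R)}

/-- The order-`α` Rényi mean `q_{α,P}`. -/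
noncomputable def renyiMean {X Y : Type*} [Fintype X] [Fintype Y] (α : ℝ) (P : X → ℝ)
    (W : X → Y → ℝ) : Y → ℝ :=
  fun y => (∑ x, P x * W x y ^ α) ^ α⁻¹ / ∑ y', (∑ x, P x * W x y' ^ α) ^ α⁻¹

/-!
Sibson's identity `I_α(P;W) + D_α(q_{α,P} ‖ q) = (α - 1)⁻¹ log ∑_x P(x) ∑_y W(y|x)^α q(y)^(1-α)`
(for `α = 1`, the golden formula of mutual information) shows that if `D_α(W(·|x) ‖ q) ≤ C` for
every `x`, then `I_α(P;W) + D_α(q_{α,P} ‖ q) ≤ C`. Apply it along inputs `P_n` with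
`I_α(P_n;W) → C_α(W)`. With `q = q_{α,W}` and `C = C_α(W)` it forces every limit point of the
Rényi means `q_{α,P_n}` to be `q_{α,W}`. With `q = q_{η,W}` and `C = C_η(W)`, admissible because
`D_α ≤ D_η`, lower semicontinuity of `D_α(· ‖ q_{η,W})` then gives
`D_α(q_{α,W} ‖ q_{η,W}) ≤ C_η(W) - C_α(W)`.
-/

open Finset Topology

section Divergence
variable {Y : Type*} [Fintype Y] {α η C : ℝ} {p q : Y → ℝ}

def RenyiDivFinite (α : ℝ) (p q : Y → ℝ) : Prop :=
  if α = 1 then ∀ y, q y = 0 → p y = 0 else 0 < ∑ y, p y ^ α * q y ^ (1 - α)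

lemma renyiDiv_one : renyiDiv 1 p q = ∑ y, p y * log (p y / q y) := if_pos rfl

lemma renyiDiv_of_ne_one (hα : α ≠ 1) :
    renyiDiv α p q = (α - 1)⁻¹ * log (∑ y, p y ^ α * q y ^ (1 - α)) := if_neg hα

lemma renyiDivFinite_one : RenyiDivFinite 1 p q ↔ ∀ y, q y = 0 → p y = 0 := iff_of_eq (if_pos rfl)

lemma renyiDivFinite_of_ne_one (hα : α ≠ 1) :
    RenyiDivFinite α p q ↔ 0 < ∑ y, p y ^ α * q y ^ (1 - α) := iff_of_eq (if_neg hα)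

lemma RenyiDivFinite.renyiDivE_eq (h : RenyiDivFinite α p q) :
    renyiDivE α p q = ENNReal.ofReal (renyiDiv α p q) := by
  unfold renyiDivE
  unfold RenyiDivFinite at h
  split_ifs at h ⊢ <;> simp_all

lemma renyiDivE_le_ofReal_iff (hC : 0 ≤ C) :
    renyiDivE α p q ≤ ENNReal.ofReal C ↔ RenyiDivFinite α p q ∧ renyiDiv α p q ≤ C := by
  by_cases h : RenyiDivFinite α p q
  · simp [h, h.renyiDivE_eq, ENNReal.ofReal_le_ofReal_iff hC]
  · refine iff_of_false ?_ (fun h' => h h'.1)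
    unfold renyiDivE
    unfold RenyiDivFinite at h
    split_ifs at h ⊢ <;> simp

lemma renyiDiv_le_of_iSup_renyiDivE_eq {ι : Type*} {w : ι → Y → ℝ} (hC : 0 ≤ C)
    (h : ⨆ i, renyiDivE α (w i) q = ENNReal.ofReal C) (i : ι) :
    RenyiDivFinite α (w i) q ∧ renyiDiv α (w i) q ≤ C :=
  (renyiDivE_le_ofReal_iff hC).1 (h ▸ le_iSup (fun i => renyiDivE α (w i) q) i)

lemma inv_sub_one_mul_log_le_iff {S : ℝ} (hα : α < 1) (hS : 0 < S) :
    (α - 1)⁻¹ * log S ≤ C ↔ exp ((α - 1) * C) ≤ S := by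
  rw [inv_mul_eq_div, div_le_iff_of_neg' (by linarith), le_log_iff_exp_le hS]

lemma IsPMF.exists_pos (hp : IsPMF p) : ∃ y, 0 < p y := by
  by_contra! h
  have : ∑ y, p y = 0 := sum_eq_zero fun y _ => (h y).antisymm (hp.1 y)
  linarith [hp.2]

lemma eq_of_one_le_sum_rpow_mul_rpow (hα0 : 0 < α) (hα1 : α < 1) (hp : IsPMF p) (hq : IsPMF q)
    (h : 1 ≤ ∑ y, p y ^ α * q y ^ (1 - α)) : p = q := by
  by_contra hne
  obtain ⟨y₀, hy₀⟩ := Function.ne_iff.1 hne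
  have hw : α + (1 - α) = 1 := by ring
  have hlt : ∑ y, p y ^ α * q y ^ (1 - α) < ∑ y, (α * p y + (1 - α) * q y) :=
    sum_lt_sum
      (fun y _ => geom_mean_le_arith_mean2_weighted hα0.le (by linarith) (hp.1 y) (hq.1 y) hw)
      ⟨y₀, mem_univ _, (geom_mean_lt_arith_mean2_weighted_iff_of_pos hα0 (by linarith)
        (hp.1 y₀) (hq.1 y₀) hw).2 hy₀⟩
  rw [sum_add_distrib, ← mul_sum, ← mul_sum, hp.2, hq.2, mul_one, mul_one, hw] at hlt
  linarith

lemma sum_rpow_mul_rpow_le {a b : Y → ℝ} (ha : ∀ y, 0 ≤ a y) (hb : ∀ y, 0 ≤ b y) {θ : ℝ}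
    (h0 : 0 < θ) (h1 : θ < 1) :
    ∑ y, a y ^ θ * b y ^ (1 - θ) ≤ (∑ y, a y) ^ θ * (∑ y, b y) ^ (1 - θ) := by
  have := inner_le_Lp_mul_Lq_of_nonneg univ (HolderConjugate.inv_one_sub_inv h0 h1)
    (f := fun y => a y ^ θ) (g := fun y => b y ^ (1 - θ))
    (fun y _ => rpow_nonneg (ha y) _) (fun y _ => rpow_nonneg (hb y) _)
  simpa only [rpow_rpow_inv (ha _) h0.ne', rpow_rpow_inv (hb _) (sub_pos.2 h1).ne', one_div,
    inv_inv] using this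

lemma renyiDiv_le_renyiDiv_of_lt_one (hα0 : 0 < α) (hαη : α < η) (hη1 : η < 1) (hp : IsPMF p)
    (hq : ∀ y, 0 ≤ q y) (h : RenyiDivFinite η p q) :
    RenyiDivFinite α p q ∧ renyiDiv α p q ≤ renyiDiv η p q := by
  have hα1 : α ≠ 1 := (hαη.trans hη1).ne
  set θ := (1 - η) / (1 - α) with hθ
  have hθ0 : 0 < θ := div_pos (by linarith) (by linarith)
  have hθ1 : θ < 1 := (div_lt_one (by linarith)).2 (by linarith)
  have hinterp : ∀ y, (p y ^ α * q y ^ (1 - α)) ^ θ * p y ^ (1 - θ) = p y ^ η * q y ^ (1 - η) := by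
    intro y
    have hexp : α * θ + (1 - θ) = η := by rw [hθ]; field_simp; ring
    rw [mul_rpow (rpow_nonneg (hp.1 y) _) (rpow_nonneg (hq y) _), ← rpow_mul (hp.1 y),
      ← rpow_mul (hq y), mul_right_comm, ← rpow_add' (hp.1 y) (by linarith), hexp]
    congr 2
    rw [hθ]; field_simp
  have hHolder : ∑ y, p y ^ η * q y ^ (1 - η) ≤ (∑ y, p y ^ α * q y ^ (1 - α)) ^ θ := by
    simpa [hinterp, hp.2] using sum_rpow_mul_rpow_le (a := fun y => p y ^ α * q y ^ (1 - α))
      (fun y => mul_nonneg (rpow_nonneg (hp.1 y) _) (rpow_nonneg (hq y) _)) hp.1 hθ0 hθ1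
  rw [renyiDivFinite_of_ne_one hη1.ne] at h
  have hSα : 0 < ∑ y, p y ^ α * q y ^ (1 - α) := by
    refine (sum_nonneg fun y _ => ?_).lt_of_ne fun h0 => ?_
    · exact mul_nonneg (rpow_nonneg (hp.1 y) _) (rpow_nonneg (hq y) _)
    · rw [← h0, zero_rpow hθ0.ne'] at hHolder
      linarith
  refine ⟨(renyiDivFinite_of_ne_one hα1).2 hSα, ?_⟩
  have hlog := log_le_log h hHolder
  rw [log_rpow hSα] at hlog
  have hcoef : (η - 1)⁻¹ * θ = (α - 1)⁻¹ := by
    rw [hθ, ← neg_sub 1 η, ← neg_sub 1 α, inv_neg, inv_neg, neg_mul, neg_inj, div_eq_mul_inv,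
      inv_mul_cancel_left₀ (by linarith)]
  rw [renyiDiv_of_ne_one hα1, renyiDiv_of_ne_one hη1.ne]
  calc (α - 1)⁻¹ * log (∑ y, p y ^ α * q y ^ (1 - α))
      = (η - 1)⁻¹ * (θ * log (∑ y, p y ^ α * q y ^ (1 - α))) := by
        rw [← mul_assoc, hcoef]
    _ ≤ _ := mul_le_mul_of_nonpos_left hlog (inv_nonpos.2 (by linarith))

lemma mul_div_rpow_one_sub (hα0 : 0 < α) {a b : ℝ} (ha : 0 ≤ a) (hb : 0 ≤ b) :
    a * (b / a) ^ (1 - α) = a ^ α * b ^ (1 - α) := by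
  rcases ha.eq_or_lt with rfl | ha
  · simp [zero_rpow hα0.ne']
  have : a ^ α = a / a ^ (1 - α) := by
    rw [eq_div_iff (rpow_pos_of_pos ha _).ne', ← rpow_add ha, add_sub_cancel, rpow_one]
  rw [div_rpow hb ha.le, this]
  ring

lemma renyiDiv_le_renyiDiv_one (hα0 : 0 < α) (hα1 : α < 1) (hp : IsPMF p) (hq : ∀ y, 0 ≤ q y)
    (h : RenyiDivFinite 1 p q) : RenyiDivFinite α p q ∧ renyiDiv α p q ≤ renyiDiv 1 p q := by
  rw [renyiDivFinite_one] at h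
  set z : Y → ℝ := fun y => (q y / p y) ^ (1 - α)
  have hratio_pos : ∀ y, p y ≠ 0 → 0 < q y / p y := fun y hy =>
    div_pos ((hq y).lt_of_ne' (mt (h y) hy)) ((hp.1 y).lt_of_ne' hy)
  have hfactor_pos : ∀ y, 0 < z y ^ p y := by
    intro y
    by_cases hy : p y = 0
    · simp [hy]
    · exact rpow_pos_of_pos (rpow_pos_of_pos (hratio_pos y hy) _) _
  have hlog_factor : ∀ y, log (z y ^ p y) = (α - 1) * (p y * log (p y / q y)) := by
    intro y
    by_cases hy : p y = 0
    · simp [hy]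
    · rw [log_rpow (rpow_pos_of_pos (hratio_pos y hy) _), log_rpow (hratio_pos y hy), ← inv_div,
        log_inv]
      ring
  have hAMGM : ∏ y, z y ^ p y ≤ ∑ y, p y ^ α * q y ^ (1 - α) :=
    calc ∏ y, z y ^ p y ≤ ∑ y, p y * z y :=
          geom_mean_le_arith_mean_weighted univ p z (fun y _ => hp.1 y) hp.2
            (fun y _ => rpow_nonneg (div_nonneg (hq y) (hp.1 y)) _)
      _ = _ := sum_congr rfl fun y _ => mul_div_rpow_one_sub hα0 (hp.1 y) (hq y)
  have hprod_pos := prod_pos fun y (_ : y ∈ univ) => hfactor_pos y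
  refine ⟨(renyiDivFinite_of_ne_one hα1.ne).2 (hprod_pos.trans_le hAMGM), ?_⟩
  have hlog := log_le_log hprod_pos hAMGM
  rw [log_prod (fun y _ => (hfactor_pos y).ne'), sum_congr rfl fun y _ => hlog_factor y,
    ← mul_sum] at hlog
  rw [renyiDiv_of_ne_one hα1.ne, renyiDiv_one, inv_mul_eq_div, div_le_iff_of_neg' (by linarith)]
  exact hlog

lemma renyiDiv_le_renyiDiv_of_le (hα0 : 0 < α) (hαη : α ≤ η) (hη1 : η ≤ 1) (hp : IsPMF p)
    (hq : ∀ y, 0 ≤ q y) (h : RenyiDivFinite η p q) :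
    RenyiDivFinite α p q ∧ renyiDiv α p q ≤ renyiDiv η p q := by
  rcases hαη.eq_or_lt with rfl | hαη
  · exact ⟨h, le_rfl⟩
  rcases hη1.eq_or_lt with rfl | hη1
  · exact renyiDiv_le_renyiDiv_one hα0 hαη hp hq h
  · exact renyiDiv_le_renyiDiv_of_lt_one hα0 hαη hη1 hp hq h

lemma eq_of_renyiDiv_nonpos_of_lt_one (hα0 : 0 < α) (hα1 : α < 1) (hp : IsPMF p) (hq : IsPMF q)
    (hfin : RenyiDivFinite α p q) (h : renyiDiv α p q ≤ 0) : p = q := by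
  rw [renyiDivFinite_of_ne_one hα1.ne] at hfin
  rw [renyiDiv_of_ne_one hα1.ne, inv_sub_one_mul_log_le_iff hα1 hfin, mul_zero, exp_zero] at h
  exact eq_of_one_le_sum_rpow_mul_rpow hα0 hα1 hp hq h

lemma eq_of_renyiDiv_nonpos (hα0 : 0 < α) (hα1 : α ≤ 1) (hp : IsPMF p) (hq : IsPMF q)
    (hfin : RenyiDivFinite α p q) (h : renyiDiv α p q ≤ 0) : p = q := by
  rcases hα1.lt_or_eq with hα1 | rfl
  · exact eq_of_renyiDiv_nonpos_of_lt_one hα0 hα1 hp hq hfin h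
  · obtain ⟨hfin', hle⟩ := renyiDiv_le_renyiDiv_one one_half_pos one_half_lt_one hp hq.1 hfin
    exact eq_of_renyiDiv_nonpos_of_lt_one one_half_pos one_half_lt_one hp hq hfin' (hle.trans h)

lemma continuous_mul_log_div (c : ℝ) : Continuous fun t : ℝ => t * log (t / c) := by
  rcases eq_or_ne c 0 with rfl | hc
  · -- `t / 0 = 0` and `log 0 = 0`, so the function vanishes identically
    simpa using continuous_const
  · refine (continuous_mul_log.comp (continuous_id.div_const c)).const_mul c |>.congr fun t => ?_
    simp only [Function.comp_apply, id]
    field_simp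

lemma renyiDiv_le_of_tendsto {ι : Type*} {l : Filter ι} [l.NeBot] (hα0 : 0 < α) (hα1 : α ≤ 1)
    {m : ι → Y → ℝ} {L : Y → ℝ} {c : ι → ℝ} {c₀ : ℝ} (hm : Tendsto m l (𝓝 L))
    (hc : Tendsto c l (𝓝 c₀)) (h : ∀ i, RenyiDivFinite α (m i) q ∧ renyiDiv α (m i) q ≤ c i) :
    RenyiDivFinite α L q ∧ renyiDiv α L q ≤ c₀ := by
  rcases hα1.lt_or_eq with hα1 | rfl
  · simp only [renyiDivFinite_of_ne_one hα1.ne, renyiDiv_of_ne_one hα1.ne] at h ⊢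
    have hS : Tendsto (fun i => ∑ y, m i y ^ α * q y ^ (1 - α)) l
        (𝓝 (∑ y, L y ^ α * q y ^ (1 - α))) := by
      have hcont : Continuous fun f : Y → ℝ => ∑ y, f y ^ α * q y ^ (1 - α) :=
        continuous_finsetSum _ fun y _ =>
          ((continuous_rpow_const hα0.le).comp (continuous_apply y)).mul continuous_const
      exact (hcont.tendsto L).comp hm
    have hexp : Tendsto (fun i => exp ((α - 1) * c i)) l (𝓝 (exp ((α - 1) * c₀))) :=
      (continuous_exp.tendsto _).comp (hc.const_mul _)
    have hbound := le_of_tendsto_of_tendsto' hexp hS fun i =>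
      (inv_sub_one_mul_log_le_iff hα1 (h i).1).1 (h i).2
    have hSpos := (exp_pos _).trans_le hbound
    exact ⟨hSpos, (inv_sub_one_mul_log_le_iff hα1 hSpos).2 hbound⟩
  · simp only [renyiDivFinite_one, renyiDiv_one] at h ⊢
    have hmy : ∀ y, Tendsto (fun i => m i y) l (𝓝 (L y)) := fun y =>
      ((continuous_apply y).tendsto L).comp hm
    refine ⟨fun y hy => tendsto_nhds_unique (hmy y) ?_, ?_⟩
    · simpa only [(h _).1 y hy] using tendsto_const_nhds
    · have hcont : Continuous fun f : Y → ℝ => ∑ y, f y * log (f y / q y) :=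
        continuous_finsetSum _ fun y _ => (continuous_mul_log_div (q y)).comp (continuous_apply y)
      exact le_of_tendsto_of_tendsto' ((hcont.tendsto L).comp hm) hc fun i => (h i).2

end Divergence

section Channel
variable {X Y : Type*} [Fintype X] [Fintype Y] {α C : ℝ} {P : X → ℝ} {W : X → Y → ℝ}
  {q : Y → ℝ}

lemma sum_sum_mul_rpow_rpow_inv_pos (hP : IsPMF P) (hW : ∀ x, IsPMF (W x)) :
    0 < ∑ y, (∑ x, P x * W x y ^ α) ^ α⁻¹ := by
  obtain ⟨x₀, hx₀⟩ := hP.exists_pos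
  obtain ⟨y₀, hy₀⟩ := (hW x₀).exists_pos
  have hterm : ∀ x y, 0 ≤ P x * W x y ^ α := fun x y =>
    mul_nonneg (hP.1 x) (rpow_nonneg ((hW x).1 y) _)
  refine sum_pos' (fun y _ => rpow_nonneg (sum_nonneg fun x _ => hterm x y) _)
    ⟨y₀, mem_univ _, rpow_pos_of_pos ?_ _⟩
  exact sum_pos' (fun x _ => hterm x y₀) ⟨x₀, mem_univ _, mul_pos hx₀ (rpow_pos_of_pos hy₀ _)⟩

lemma isPMF_renyiMean (hP : IsPMF P) (hW : ∀ x, IsPMF (W x)) :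
    IsPMF (renyiMean α P W) := by
  have hN := sum_sum_mul_rpow_rpow_inv_pos (α := α) hP hW
  refine ⟨fun y => div_nonneg (rpow_nonneg (sum_nonneg fun x _ => ?_) _) hN.le, ?_⟩
  · exact mul_nonneg (hP.1 x) (rpow_nonneg ((hW x).1 y) _)
  · simp only [renyiMean]
    rw [← sum_div, div_self hN.ne']

lemma renyiMean_one (hP : IsPMF P) (hW : ∀ x, IsPMF (W x)) :
    renyiMean 1 P W = fun y => ∑ x, P x * W x y := by
  have hsum : ∑ y, ∑ x, P x * W x y = 1 := by
    rw [sum_comm]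
    simp [← mul_sum, (hW _).2, hP.2]
  ext y
  simp [renyiMean, hsum]

lemma renyiInfo_add_renyiDiv_renyiMean (hα0 : 0 < α) (hα1 : α < 1) (hP : IsPMF P)
    (hW : ∀ x, IsPMF (W x)) (hV : 0 < ∑ x, P x * ∑ y, W x y ^ α * q y ^ (1 - α)) :
    RenyiDivFinite α (renyiMean α P W) q ∧
      renyiInfo α P W + renyiDiv α (renyiMean α P W) q =
        (α - 1)⁻¹ * log (∑ x, P x * ∑ y, W x y ^ α * q y ^ (1 - α)) := by
  have hA : ∀ y, 0 ≤ ∑ x, P x * W x y ^ α := fun y =>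
    sum_nonneg fun x _ => mul_nonneg (hP.1 x) (rpow_nonneg ((hW x).1 y) _)
  have hN := sum_sum_mul_rpow_rpow_inv_pos (α := α) hP hW
  set N := ∑ y, (∑ x, P x * W x y ^ α) ^ α⁻¹ with hN_def
  have hNα := rpow_pos_of_pos hN α
  have hS : ∑ y, renyiMean α P W y ^ α * q y ^ (1 - α) =
      (∑ x, P x * ∑ y, W x y ^ α * q y ^ (1 - α)) / N ^ α := by
    simp only [mul_sum, sum_div]
    rw [sum_comm]
    refine sum_congr rfl fun y _ => ?_
    rw [renyiMean, div_rpow (rpow_nonneg (hA y) _) hN.le, rpow_inv_rpow (hA y) hα0.ne',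
      div_mul_eq_mul_div, sum_mul, sum_div]
    exact sum_congr rfl fun x _ => by ring
  refine ⟨(renyiDivFinite_of_ne_one hα1.ne).2 (hS ▸ div_pos hV hNα), ?_⟩
  have hα1' : α - 1 ≠ 0 := by linarith
  rw [renyiInfo, if_neg hα1.ne, ← hN_def, renyiDiv_of_ne_one hα1.ne, hS, log_div hV.ne' hNα.ne',
    log_rpow hN]
  field_simp
  ring

lemma inv_sub_one_mul_log_sum_mul_le (hα1 : α < 1) (hP : IsPMF P) {S : X → ℝ}
    (hS : ∀ x, 0 < S x) (h : ∀ x, (α - 1)⁻¹ * log (S x) ≤ C) :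
    0 < ∑ x, P x * S x ∧ (α - 1)⁻¹ * log (∑ x, P x * S x) ≤ C := by
  have hexp : exp ((α - 1) * C) ≤ ∑ x, P x * S x :=
    calc exp ((α - 1) * C) = ∑ x, P x * exp ((α - 1) * C) := by rw [← sum_mul, hP.2, one_mul]
      _ ≤ _ := sum_le_sum fun x _ => mul_le_mul_of_nonneg_left
          ((inv_sub_one_mul_log_le_iff hα1 (hS x)).1 (h x)) (hP.1 x)
  have hpos := (exp_pos _).trans_le hexp
  exact ⟨hpos, (inv_sub_one_mul_log_le_iff hα1 hpos).2 hexp⟩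

lemma renyiInfo_one_add_renyiDiv_renyiMean (hP : IsPMF P) (hW : ∀ x, IsPMF (W x))
    (hq : ∀ x y, q y = 0 → W x y = 0) :
    renyiInfo 1 P W + renyiDiv 1 (renyiMean 1 P W) q = ∑ x, P x * renyiDiv 1 (W x) q := by
  have hterm : ∀ x y, P x * (W x y * log (W x y / ∑ x', P x' * W x' y)) +
      P x * W x y * log ((∑ x', P x' * W x' y) / q y) = P x * (W x y * log (W x y / q y)) := by
    intro x y
    rcases (mul_nonneg (hP.1 x) ((hW x).1 y)).eq_or_lt with h0 | hpos
    · rcases mul_eq_zero.1 h0.symm with h | h <;> simp [h]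
    have hW0 : W x y ≠ 0 := right_ne_zero_of_mul hpos.ne'
    have hm0 : ∑ x', P x' * W x' y ≠ 0 := (hpos.trans_le (single_le_sum
      (fun x' _ => mul_nonneg (hP.1 x') ((hW x').1 y)) (mem_univ x))).ne'
    have hq0 : q y ≠ 0 := fun h => hW0 (hq x y h)
    rw [log_div hW0 hm0, log_div hm0 hq0, log_div hW0 hq0]
    ring
  simp only [renyiInfo, if_true, renyiMean_one hP hW, renyiDiv_one, sum_mul]
  rw [sum_comm (f := fun y x => P x * W x y * _), ← sum_add_distrib]
  refine sum_congr rfl fun x _ => ?_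
  rw [mul_sum, mul_sum, ← sum_add_distrib]
  exact sum_congr rfl fun y _ => hterm x y

lemma renyiInfo_add_renyiDiv_renyiMean_le (hα0 : 0 < α) (hα1 : α ≤ 1) (hP : IsPMF P)
    (hW : ∀ x, IsPMF (W x)) (h : ∀ x, RenyiDivFinite α (W x) q ∧ renyiDiv α (W x) q ≤ C) :
    RenyiDivFinite α (renyiMean α P W) q ∧
      renyiInfo α P W + renyiDiv α (renyiMean α P W) q ≤ C := by
  rcases hα1.lt_or_eq with hα1 | rfl
  · simp only [renyiDivFinite_of_ne_one hα1.ne, renyiDiv_of_ne_one hα1.ne] at h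
    obtain ⟨hV, hle⟩ := inv_sub_one_mul_log_sum_mul_le hα1 hP (fun x => (h x).1) fun x => (h x).2
    obtain ⟨hfin, heq⟩ := renyiInfo_add_renyiDiv_renyiMean hα0 hα1 hP hW hV
    exact ⟨hfin, heq ▸ hle⟩
  · simp only [renyiDivFinite_one] at h ⊢
    have hq : ∀ x y, q y = 0 → W x y = 0 := fun x y hy => (h x).1 y hy
    refine ⟨fun y hy => by simp [renyiMean_one hP hW, hq _ y hy], ?_⟩
    rw [renyiInfo_one_add_renyiDiv_renyiMean hP hW hq]
    calc ∑ x, P x * renyiDiv 1 (W x) q ≤ ∑ x, P x * C :=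
          sum_le_sum fun x _ => mul_le_mul_of_nonneg_left (h x).2 (hP.1 x)
      _ = C := by rw [← sum_mul, hP.2, one_mul]

lemma isPMF_pi_single [DecidableEq X] (x₀ : X) : IsPMF (Pi.single x₀ (1 : ℝ)) :=
  ⟨fun x => by by_cases h : x = x₀ <;> simp [h], by simp⟩

lemma renyiInfo_pi_single [DecidableEq X] (hα0 : 0 < α) (hW : ∀ x, IsPMF (W x)) (x₀ : X) :
    renyiInfo α (Pi.single x₀ 1) W = 0 := by
  rcases eq_or_ne α 1 with rfl | hα1
  · simp [renyiInfo, Pi.single_apply]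
  · simp [renyiInfo, hα1, Pi.single_apply, rpow_rpow_inv ((hW x₀).1 _) hα0.ne', (hW x₀).2]

end Channel

section Capacity
variable {X Y : Type*} [Fintype X] [Fintype Y] [Nonempty X] {α C : ℝ} {W : X → Y → ℝ}

lemma zero_mem_setOf_renyiInfo (hα0 : 0 < α) (hW : ∀ x, IsPMF (W x)) :
    (0 : ℝ) ∈ {c | ∃ P : X → ℝ, IsPMF P ∧ c = renyiInfo α P W} := by
  classical
  let x₀ := Classical.arbitrary X
  exact ⟨_, isPMF_pi_single x₀, (renyiInfo_pi_single hα0 hW x₀).symm⟩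

lemma renyiCap_nonneg (hα0 : 0 < α) (hW : ∀ x, IsPMF (W x)) : 0 ≤ renyiCap α W := by
  by_cases hbdd : BddAbove {c | ∃ P : X → ℝ, IsPMF P ∧ c = renyiInfo α P W}
  · exact le_csSup hbdd (zero_mem_setOf_renyiInfo hα0 hW)
  · -- `sSup` of a set unbounded above is the junk value `0`
    exact (Real.sSup_of_not_bddAbove hbdd).ge

lemma exists_lt_renyiInfo (hα0 : 0 < α) (hW : ∀ x, IsPMF (W x)) {c : ℝ}
    (hc : c < renyiCap α W) : ∃ P, IsPMF P ∧ c < renyiInfo α P W := by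
  obtain ⟨_, ⟨P, hP, rfl⟩, hlt⟩ := exists_lt_of_lt_csSup ⟨0, zero_mem_setOf_renyiInfo hα0 hW⟩ hc
  exact ⟨P, hP, hlt⟩

lemma renyiDiv_le_sub_renyiCap (hα0 : 0 < α) (hα1 : α ≤ 1) (hW : ∀ x, IsPMF (W x))
    {q₀ q : Y → ℝ} (hq₀ : IsPMF q₀)
    (h₀ : ∀ x, RenyiDivFinite α (W x) q₀ ∧ renyiDiv α (W x) q₀ ≤ renyiCap α W)
    (h : ∀ x, RenyiDivFinite α (W x) q ∧ renyiDiv α (W x) q ≤ C) :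
    RenyiDivFinite α q₀ q ∧ renyiDiv α q₀ q ≤ C - renyiCap α W := by
  choose P hP hPI using fun n : ℕ =>
    exists_lt_renyiInfo hα0 hW (sub_lt_self (renyiCap α W) (Nat.one_div_pos_of_nat (n := n)))
  have hbound : ∀ {q : Y → ℝ} {C : ℝ}, (∀ x, RenyiDivFinite α (W x) q ∧ renyiDiv α (W x) q ≤ C) →
      ∀ n : ℕ, RenyiDivFinite α (renyiMean α (P n) W) q ∧
        renyiDiv α (renyiMean α (P n) W) q ≤ C - renyiCap α W + 1 / (n + 1) := by
    intro q C h n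
    obtain ⟨hfin, hle⟩ := renyiInfo_add_renyiDiv_renyiMean_le hα0 hα1 (hP n) hW h
    exact ⟨hfin, by linarith [hPI n]⟩
  obtain ⟨L, hL, φ, hφ, hmL⟩ :=
    (isCompact_stdSimplex ℝ Y).tendsto_subseq fun n => isPMF_renyiMean (α := α) (hP n) hW
  have hε : ∀ c : ℝ, Tendsto (fun k => c + 1 / ((φ k : ℝ) + 1)) atTop (𝓝 c) := fun c => by
    simpa using (tendsto_one_div_add_atTop_nhds_zero_nat.comp hφ.tendsto_atTop).const_add c
  have hLq₀ : L = q₀ := by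
    obtain ⟨hfin, hle⟩ := renyiDiv_le_of_tendsto hα0 hα1 hmL (hε 0) fun k => by
      simpa only [sub_self, Function.comp_apply] using hbound h₀ (φ k)
    exact eq_of_renyiDiv_nonpos hα0 hα1 hL hq₀ hfin hle
  subst hLq₀
  exact renyiDiv_le_of_tendsto hα0 hα1 hmL (hε _) fun k => hbound h (φ k)

end Capacity

/-- `C_η(W) − C_α(W) ≥ D_α(q_{α,W}‖q_{η,W})` for `0 < α ≤ η ≤ 1`. -/
theorem renyiCap_diff_ge_center_div {X Y : Type*} [Fintype X] [Fintype Y] [Nonempty X]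
    (W : X → Y → ℝ) (hW : ∀ x, IsPMF (W x)) (α η : ℝ) (h0 : 0 < α) (hαη : α ≤ η)
    (hη : η ≤ 1) (qα qη : Y → ℝ)
    (hqα : IsPMF qα) (hqαc : (⨆ x, renyiDivE α (W x) qα) = ENNReal.ofReal (renyiCap α W))
    (hqη : IsPMF qη) (hqηc : (⨆ x, renyiDivE η (W x) qη) = ENNReal.ofReal (renyiCap η W)) :
    renyiDivE α qα qη ≤ ENNReal.ofReal (renyiCap η W - renyiCap α W) := by
  have hWqα := renyiDiv_le_of_iSup_renyiDivE_eq (renyiCap_nonneg h0 hW) hqαc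
  have hWqη : ∀ x, RenyiDivFinite α (W x) qη ∧ renyiDiv α (W x) qη ≤ renyiCap η W := fun x => by
    obtain ⟨hfin, hle⟩ :=
      renyiDiv_le_of_iSup_renyiDivE_eq (renyiCap_nonneg (h0.trans_le hαη) hW) hqηc x
    obtain ⟨hfin', hle'⟩ := renyiDiv_le_renyiDiv_of_le h0 hαη hη (hW x) hqη.1 hfin
    exact ⟨hfin', hle'.trans hle⟩
  obtain ⟨hfin, hle⟩ := renyiDiv_le_sub_renyiCap h0 (hαη.trans hη) hW hqα hWqα hWqη
  rw [hfin.renyiDivE_eq]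
  exact ENNReal.ofReal_le_ofReal hle
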